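/- Let G be a graph, T a tree, f : G → T a graph homomorphism, n ≥ 1 an integer, and η a multi-homomorphism from G to T such that d_T(f(z), y) ≤ 2n for every z ∈ V(G) and every y ∈ η(z). Let (x,x′) ∈ E(G) be an edge with u_η(x) = u_η(x′) = 2n. Then the following are equivalent: (1) η(x) is a singleton {y}, and for every y′ ∈ η(x′) with d_T(f(x′), y′) = 2n the unique path in T from f(x′) to y′ contains y; (2) there exist y ∈ η(x) and y′ ∈ η(x′) with d_T(f(x), y) = d_T(f(x′), y′) = 2n such that the unique path in T from f(x′) to y′ contains y. -/

import Mathlib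

/-!
In a tree, a vertex `y` lies on every path from `p` to `q` iff `d p y + d y q = d p q`; this and
the other metric facts used (adjacent vertices are at distances of different parity from any
vertex, and a vertex has at most one neighbour one step closer to a given base point) all come
from uniqueness of paths, since two internally disjoint paths with common ends close up into a
cycle. With `a = f x`, `a' = f x'` and `y ~ y'`, condition (2) says `d a' y = 2n - 1`. Parity
gives `d a y' = 2n ± 1`, and `2n - 1` is excluded because then `a` and `y` would both lie on the
geodesic from `a'` to `y'`, at distance `2n - 2`. So `d a y' = 2n + 1`, and every `z ∈ η x`, being
a neighbour of `y'` with `d a z ≤ 2n`, is the neighbour of `y'` one step closer to `a`, i.e. `y`.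
The path condition for another `y'' ∈ η x'` at distance `2n` is again `d a' y + 1 = 2n`.
-/

structure Graph' where
  V : Type
  E : V → V → Prop
  symm : ∀ {x y}, E x y → E y x

def IsGraphHom (G H : Graph') (f : G.V → H.V) : Prop :=
  ∀ {x y}, G.E x y → H.E (f x) (f y)

structure Walk (G : Graph') (a b : G.V) where
  len : ℕ
  toFun : ℕ → G.V
  start_eq : toFun 0 = a
  end_eq : toFun len = b
  adj : ∀ i, i < len → G.E (toFun i) (toFun (i + 1))

structure MultiHom (G H : Graph') where
  toFun : G.V → Set H.V
  nonempty : ∀ x, (toFun x).Nonempty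
  edge : ∀ {x y}, G.E x y → ∀ a ∈ toFun x, ∀ b ∈ toFun y, H.E a b

def MultiHom.le {G H : Graph'} (η η' : MultiHom G H) : Prop :=
  ∀ x, η.toFun x ⊆ η'.toFun x

def SameComponent {G H : Graph'} (η η' : MultiHom G H) : Prop :=
  Relation.ReflTransGen (fun a b => MultiHom.le a b ∨ MultiHom.le b a) η η'

def ofHom {G H : Graph'} (f : G.V → H.V) (hf : IsGraphHom G H f) : MultiHom G H where
  toFun x := {f x}
  nonempty x := ⟨f x, rfl⟩
  edge := by
    intro x y hxy a ha b hb
    rw [Set.mem_singleton_iff] at ha hb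
    subst ha; subst hb
    exact hf hxy

def prodI (G : Graph') (n : ℕ) : Graph' where
  V := G.V × Fin (n + 1)
  E := fun p q => G.E p.1 q.1 ∧ p.2.val ≤ q.2.val + 1 ∧ q.2.val ≤ p.2.val + 1
  symm := by
    rintro p q ⟨h1, h2, h3⟩
    exact ⟨G.symm h1, h3, h2⟩

def MoveA {G : Graph'} {a b : G.V} (γ δ : Walk G a b) : Prop :=
  δ.len = γ.len + 2 ∧ ∃ k ≤ γ.len,
    (∀ i ≤ k, δ.toFun i = γ.toFun i) ∧
    (∀ i, k ≤ i → i ≤ γ.len → δ.toFun (i + 2) = γ.toFun i)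

def MoveB {G : Graph'} {a b : G.V} (γ δ : Walk G a b) : Prop :=
  γ.len = δ.len ∧ ∃ j, ∀ i ≤ γ.len, i ≠ j → γ.toFun i = δ.toFun i

def Eqv1 {G : Graph'} {a b : G.V} : Walk G a b → Walk G a b → Prop :=
  Relation.EqvGen MoveA

def Eqv2 {G : Graph'} {a b : G.V} : Walk G a b → Walk G a b → Prop :=
  Relation.EqvGen (fun γ δ => MoveA γ δ ∨ MoveB γ δ)

noncomputable def Graph'.dist (G : Graph') (a b : G.V) : ℕ :=
  sInf {n | ∃ γ : Walk G a b, γ.len = n}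

def Graph'.Connected (G : Graph') : Prop := ∀ a b : G.V, Nonempty (Walk G a b)

def Graph'.Bipartite (G : Graph') : Prop :=
  ∃ c : G.V → ZMod 2, ∀ {x y}, G.E x y → c x ≠ c y

def constWalk {G : Graph'} (a : G.V) : Walk G a a :=
  ⟨0, fun _ => a, rfl, rfl, fun i hi => absurd hi (by omega)⟩

def Walk.concat {G : Graph'} {a b c : G.V} (γ : Walk G a b) (δ : Walk G b c) :
    Walk G a c where
  len := γ.len + δ.len
  toFun i := if i ≤ γ.len then γ.toFun i else δ.toFun (i - γ.len)
  start_eq := by simp [γ.start_eq]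
  end_eq := by
    by_cases h : δ.len = 0
    · have hbc : b = c := by
        have h1 := δ.end_eq
        rw [h, δ.start_eq] at h1
        exact h1
      simp [h, γ.end_eq, hbc]
    · have h1 : ¬ (γ.len + δ.len ≤ γ.len) := by omega
      try dsimp only
      rw [if_neg h1]
      have h2 : γ.len + δ.len - γ.len = δ.len := by omega
      rw [h2, δ.end_eq]
  adj := by
    intro i hi
    try dsimp only
    rcases lt_trichotomy i γ.len with h | h | h
    · rw [if_pos (by omega : i ≤ γ.len), if_pos (by omega : i + 1 ≤ γ.len)]
      exact γ.adj i h
    · have hδ : 0 < δ.len := by omega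
      rw [if_pos (by omega : i ≤ γ.len), if_neg (by omega : ¬ i + 1 ≤ γ.len)]
      have h2 : i + 1 - γ.len = 1 := by omega
      rw [h2, h, γ.end_eq]
      have h3 := δ.adj 0 hδ
      rw [δ.start_eq] at h3
      exact h3
    · rw [if_neg (by omega : ¬ i ≤ γ.len), if_neg (by omega : ¬ i + 1 ≤ γ.len)]
      have h2 : i + 1 - γ.len = (i - γ.len) + 1 := by omega
      rw [h2]
      exact δ.adj (i - γ.len) (by omega)

def Walk.reverse {G : Graph'} {a b : G.V} (γ : Walk G a b) : Walk G b a where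
  len := γ.len
  toFun i := γ.toFun (γ.len - i)
  start_eq := by simp [γ.end_eq]
  end_eq := by simp [γ.start_eq]
  adj := by
    intro i hi
    have h1 : γ.len - i = (γ.len - (i + 1)) + 1 := by omega
    have h2 := γ.adj (γ.len - (i + 1)) (by omega)
    rw [← h1] at h2
    exact G.symm h2

def Walk.map {G H : Graph'} (f : G.V → H.V) (hf : IsGraphHom G H f) {a b : G.V}
    (γ : Walk G a b) : Walk H (f a) (f b) where
  len := γ.len
  toFun i := f (γ.toFun i)
  start_eq := by (try dsimp only); rw [γ.start_eq]
  end_eq := by (try dsimp only); rw [γ.end_eq]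
  adj := fun i hi => hf (γ.adj i hi)

def Walk.pow {G : Graph'} {a : G.V} (γ : Walk G a a) : ℕ → Walk G a a
  | 0 => constWalk a
  | n + 1 => (Walk.pow γ n).concat γ

def Walk.zpow {G : Graph'} {a : G.V} (γ : Walk G a a) : ℤ → Walk G a a
  | Int.ofNat n => γ.pow n
  | Int.negSucc n => γ.reverse.pow (n + 1)
def finClip (n t : ℕ) : Fin (n + 1) := ⟨min t n, by omega⟩

def realizedWalk {G H : Graph'} {n : ℕ} (h : (prodI G n).V → H.V)
    (hh : IsGraphHom (prodI G n) H h) {v v' : G.V} (hvv' : G.E v v')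
    {w : H.V} (h0 : h (v, finClip n 0) = w) (hN : h (v, finClip n n) = w) :
    Walk H w w where
  len := 2 * n
  toFun i := if i % 2 = 0 then h (v, finClip n (i / 2)) else h (v', finClip n (i / 2))
  start_eq := by
    try dsimp only
    rw [if_pos (by norm_num : (0:ℕ) % 2 = 0), Nat.zero_div]
    exact h0
  end_eq := by
    try dsimp only
    rw [if_pos (by omega : (2 * n) % 2 = 0)]
    have h2 : 2 * n / 2 = n := by omega
    rw [h2]
    exact hN
  adj := by
    intro i hi
    try dsimp only
    rcases Nat.even_or_odd i with he | ho
    · obtain ⟨t, ht⟩ := he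
      rw [if_pos (by omega : i % 2 = 0), if_neg (by omega : ¬ (i + 1) % 2 = 0)]
      have h4 : (i + 1) / 2 = i / 2 := by omega
      rw [h4]
      refine hh ⟨hvv', ?_, ?_⟩ <;> ((try dsimp only); omega)
    · obtain ⟨t, ht⟩ := ho
      rw [if_neg (by omega : ¬ i % 2 = 0), if_pos (by omega : (i + 1) % 2 = 0)]
      refine hh ⟨G.symm hvv', ?_, ?_⟩ <;> (dsimp only [finClip]; omega)

def Realizable {G H : Graph'} (f : G.V → H.V) (v : G.V) (ω : Walk H (f v) (f v)) : Prop :=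
  ∃ (n : ℕ) (h : (prodI G n).V → H.V) (hh : IsGraphHom (prodI G n) H h)
    (hs : ∀ x, h (x, finClip n 0) = f x) (he : ∀ x, h (x, finClip n n) = f x)
    (v' : G.V) (_ : G.E v v'),
    Eqv2 ω (realizedWalk h hh ‹G.E v v'› (hs v) (he v))
def SquareFree (G : Graph') : Prop :=
  (∀ x, ¬ G.E x x) ∧
  ¬ ∃ a b c d : G.V, a ≠ b ∧ a ≠ c ∧ a ≠ d ∧ b ≠ c ∧ b ≠ d ∧ c ≠ d ∧
    G.E a b ∧ G.E b c ∧ G.E c d ∧ G.E d a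

def nbhd (G : Graph') (v : G.V) : Set G.V := {y | G.E v y}

def nbhd2 (G : Graph') (v : G.V) : Set G.V := {z | ∃ y, G.E v y ∧ G.E y z}

def IsGraphCovering (G H : Graph') (p : G.V → H.V) : Prop :=
  IsGraphHom G H p ∧ ∀ v : G.V, Set.BijOn p (nbhd G v) (nbhd H (p v))

def Is2CoveringMap (G H : Graph') (p : G.V → H.V) : Prop :=
  IsGraphHom G H p ∧ ∀ v : G.V,
    Set.BijOn p (nbhd G v) (nbhd H (p v)) ∧ Set.BijOn p (nbhd2 G v) (nbhd2 H (p v))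

def pushforward {G H1 H2 : Graph'} (p : H1.V → H2.V) (hp : IsGraphHom H1 H2 p)
    (η : MultiHom G H1) : MultiHom G H2 where
  toFun x := p '' η.toFun x
  nonempty x := (η.nonempty x).image p
  edge := by
    rintro x y hxy a ⟨a', ha', rfl⟩ b ⟨b', hb', rfl⟩
    exact hp (η.edge hxy a' ha' b' hb')

def IsCycleWalk {G : Graph'} {a : G.V} (γ : Walk G a a) : Prop :=
  3 ≤ γ.len ∧ ∀ i j, i < γ.len → j < γ.len → γ.toFun i = γ.toFun j → i = j

def IsTree (T : Graph') : Prop :=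
  (∀ x, ¬ T.E x x) ∧ (∀ a b : T.V, Nonempty (Walk T a b)) ∧
    ∀ (a : T.V) (γ : Walk T a a), ¬ IsCycleWalk γ

def IsPath {G : Graph'} {a b : G.V} (γ : Walk G a b) : Prop :=
  ∀ i j, i ≤ γ.len → j ≤ γ.len → γ.toFun i = γ.toFun j → i = j

def OnWalk {G : Graph'} {a b : G.V} (γ : Walk G a b) (y : G.V) : Prop :=
  ∃ i ≤ γ.len, γ.toFun i = y

def CrossHomotopic (G H : Graph') (f g : G.V → H.V) : Prop :=
  ∃ (n : ℕ) (h : (prodI G n).V → H.V), IsGraphHom (prodI G n) H h ∧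
    (∀ x, h (x, finClip n 0) = f x) ∧ (∀ x, h (x, finClip n n) = g x)

def quotGraph (G : Graph') (Γ : Type) [Group Γ] [MulAction Γ G.V] : Graph' where
  V := Quotient (MulAction.orbitRel Γ G.V)
  E := fun α β => ∃ x y : G.V, Quotient.mk (MulAction.orbitRel Γ G.V) x = α ∧
        Quotient.mk (MulAction.orbitRel Γ G.V) y = β ∧ G.E x y
  symm := by
    rintro α β ⟨x, y, hx, hy, hxy⟩
    exact ⟨y, x, hy, hx, G.symm hxy⟩

namespace Walk

variable {G : Graph'} {a b c d : G.V}

def ofAdj (h : G.E a b) : Walk G a b where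
  len := 1
  toFun i := if i = 0 then a else b
  start_eq := if_pos rfl
  end_eq := if_neg one_ne_zero
  adj i hi := by
    obtain rfl : i = 0 := by omega
    simpa using h

@[simps]
def sub (γ : Walk G a b) (i j : ℕ) (hij : i ≤ j) (hj : j ≤ γ.len)
    (hc : γ.toFun i = c) (hd : γ.toFun j = d) : Walk G c d where
  len := j - i
  toFun t := γ.toFun (i + t)
  start_eq := hc
  end_eq := by rwa [Nat.add_sub_cancel' hij]
  adj t ht := γ.adj (i + t) (by omega)

theorem concat_len (γ : Walk G a b) (δ : Walk G b c) :
    (γ.concat δ).len = γ.len + δ.len := rfl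

theorem concat_toFun_of_le (γ : Walk G a b) (δ : Walk G b c) {i : ℕ} (hi : i ≤ γ.len) :
    (γ.concat δ).toFun i = γ.toFun i := if_pos hi

theorem concat_toFun_len_add (γ : Walk G a b) (δ : Walk G b c) (i : ℕ) :
    (γ.concat δ).toFun (γ.len + i) = δ.toFun i := by
  rcases Nat.eq_zero_or_pos i with rfl | hi
  · rw [add_zero, concat_toFun_of_le _ _ le_rfl, γ.end_eq, δ.start_eq]
  · exact (if_neg (by omega)).trans (by rw [Nat.add_sub_cancel_left])

theorem reverse_len (γ : Walk G a b) : γ.reverse.len = γ.len := rfl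

theorem reverse_toFun (γ : Walk G a b) (i : ℕ) : γ.reverse.toFun i = γ.toFun (γ.len - i) := rfl

def IsGeodesic (γ : Walk G a b) : Prop := γ.len = G.dist a b

end Walk

open Walk

theorem IsPath.sub {G : Graph'} {a b c d : G.V} {γ : Walk G a b} (hγ : IsPath γ) {i j : ℕ}
    (hij : i ≤ j) (hj : j ≤ γ.len) (hc : γ.toFun i = c) (hd : γ.toFun j = d) :
    IsPath (γ.sub i j hij hj hc hd) := by
  intro p q hp hq h
  simp only [sub_len, sub_toFun] at hp hq h
  have := hγ (i + p) (i + q) (by omega) (by omega) h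
  omega

namespace Graph'

variable {G : Graph'} {a b c : G.V}

theorem dist_le_len (γ : Walk G a b) : G.dist a b ≤ γ.len := Nat.sInf_le ⟨γ, rfl⟩

theorem exists_len_eq_dist (γ : Walk G a b) : ∃ δ : Walk G a b, δ.len = G.dist a b :=
  Nat.sInf_mem (s := {n | ∃ δ : Walk G a b, δ.len = n}) ⟨_, γ, rfl⟩

theorem dist_eq_one_of_adj (h : G.E a b) (hab : a ≠ b) : G.dist a b = 1 := by
  obtain ⟨δ, hδ⟩ := exists_len_eq_dist (ofAdj h)
  have hle : G.dist a b ≤ 1 := dist_le_len (ofAdj h)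
  have hne : δ.len ≠ 0 := fun h0 => hab (δ.start_eq.symm.trans (h0 ▸ δ.end_eq))
  omega

theorem Connected.exists_isGeodesic (hG : G.Connected) (a b : G.V) :
    ∃ γ : Walk G a b, γ.IsGeodesic :=
  exists_len_eq_dist (Classical.choice (hG a b))

theorem Connected.dist_triangle (hG : G.Connected) (a b c : G.V) :
    G.dist a c ≤ G.dist a b + G.dist b c := by
  obtain ⟨γ, hγ⟩ := hG.exists_isGeodesic a b
  obtain ⟨δ, hδ⟩ := hG.exists_isGeodesic b c
  have := dist_le_len (γ.concat δ)
  rw [concat_len] at this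
  unfold IsGeodesic at hγ hδ
  omega

end Graph'

open Graph'

namespace Walk.IsGeodesic

variable {G : Graph'} {a b : G.V} {γ : Walk G a b}

theorem dist_toFun (hG : G.Connected) (hγ : γ.IsGeodesic) {i : ℕ} (hi : i ≤ γ.len) :
    G.dist a (γ.toFun i) = i ∧ G.dist (γ.toFun i) b = γ.len - i := by
  have h₁ := dist_le_len (γ.sub 0 i (Nat.zero_le i) hi γ.start_eq rfl)
  have h₂ := dist_le_len (γ.sub i γ.len hi le_rfl rfl γ.end_eq)
  have h₃ := hG.dist_triangle a (γ.toFun i) b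
  simp only [sub_len] at h₁ h₂
  unfold IsGeodesic at hγ
  omega

theorem isPath (hG : G.Connected) (hγ : γ.IsGeodesic) : IsPath γ := by
  intro i j hi hj h
  rw [← (hγ.dist_toFun hG hi).1, ← (hγ.dist_toFun hG hj).1, h]

end Walk.IsGeodesic

namespace IsTree

variable {T : Graph'} {a b : T.V}

theorem connected (hT : IsTree T) : T.Connected := hT.2.1

theorem dist_eq_one_of_adj (hT : IsTree T) (h : T.E a b) : T.dist a b = 1 :=
  Graph'.dist_eq_one_of_adj h fun hab => hT.1 b (hab ▸ h)

theorem len_add_len_le_two_of_disjoint (hT : IsTree T) {P Q : Walk T a b} (hP : IsPath P)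
    (hQ : IsPath Q)
    (hdisj : ∀ p q, 0 < p → p < P.len → 0 < q → q < Q.len → P.toFun p ≠ Q.toFun q) :
    P.len + Q.len ≤ 2 := by
  by_contra! hlen
  have hPQ : ∀ p ≤ P.len, ∀ q, 0 < q → q < Q.len → P.toFun p ≠ Q.toFun q := by
    intro p hp q hq₀ hq h
    rcases Nat.eq_zero_or_pos p with rfl | hp₀
    · have := hQ 0 q (Nat.zero_le _) hq.le (Q.start_eq.trans (P.start_eq.symm.trans h))
      omega
    rcases hp.lt_or_eq with hp' | rfl
    · exact hdisj p q hp₀ hp' hq₀ hq h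
    · have := hQ _ q le_rfl hq.le (Q.end_eq.trans (P.end_eq.symm.trans h))
      omega
  have hback : ∀ i, P.len < i → (P.concat Q.reverse).toFun i = Q.toFun (P.len + Q.len - i) := by
    intro i hi
    obtain ⟨k, rfl⟩ := Nat.exists_eq_add_of_lt hi
    rw [add_assoc, concat_toFun_len_add, reverse_toFun]
    congr 1
    omega
  refine hT.2.2 a (P.concat Q.reverse) ⟨hlen, fun i j hi hj hij => ?_⟩
  rw [concat_len, reverse_len] at hi hj
  wlog hle : i ≤ j generalizing i j
  · exact (this j i hj hi hij.symm (by omega)).symm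
  rcases le_or_gt j P.len with hjP | hjP
  · rw [concat_toFun_of_le _ _ (hle.trans hjP), concat_toFun_of_le _ _ hjP] at hij
    exact hP i j (hle.trans hjP) hjP hij
  rcases le_or_gt i P.len with hiP | hiP
  · rw [concat_toFun_of_le _ _ hiP, hback j hjP] at hij
    exact absurd hij (hPQ i hiP _ (by omega) (by omega))
  · rw [hback i hiP, hback j hjP] at hij
    have := hQ _ _ (by omega) (by omega) hij
    omega

theorem toFun_eq_of_isPath (hT : IsTree T) {P Q : Walk T a b} (hP : IsPath P) (hQ : IsPath Q)
    {i : ℕ} (hiP : i ≤ P.len) (hiQ : i ≤ Q.len) : P.toFun i = Q.toFun i := by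
  classical
  -- `m` is the first index where `P` and `Q` differ and `j` the first index after it where `P`
  -- is back on `Q`; the two detours from `m - 1` to `P j` are internally disjoint.
  by_contra hne
  have hdiv : ∃ m, m ≤ P.len ∧ m ≤ Q.len ∧ P.toFun m ≠ Q.toFun m := ⟨i, hiP, hiQ, hne⟩
  obtain ⟨hmP, hmQ, hm⟩ := Nat.find_spec hdiv
  have hm₀ : Nat.find hdiv ≠ 0 := fun h => hm (by rw [h, P.start_eq, Q.start_eq])
  set m := Nat.find hdiv
  have hs : P.toFun (m - 1) = Q.toFun (m - 1) := by
    by_contra h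
    exact Nat.find_min hdiv (show m - 1 < m by omega) ⟨by omega, by omega, h⟩
  have hmeet : ∃ j, m ≤ j ∧ j ≤ P.len ∧ ∃ j', m ≤ j' ∧ j' ≤ Q.len ∧ P.toFun j = Q.toFun j' :=
    ⟨P.len, hmP, le_rfl, Q.len, hmQ, le_rfl, P.end_eq.trans Q.end_eq.symm⟩
  obtain ⟨hmj, hjP, j', hmj', hj'Q, hjj'⟩ := Nat.find_spec hmeet
  set j := Nat.find hmeet
  have hlen := hT.len_add_len_le_two_of_disjoint
    (hP.sub (show m - 1 ≤ j by omega) hjP rfl rfl)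
    (hQ.sub (show m - 1 ≤ j' by omega) hj'Q hs.symm hjj'.symm) <| by
      intro p q _ hp _ hq h
      simp only [sub_len, sub_toFun] at hp hq h
      exact Nat.find_min hmeet (show m - 1 + p < j by omega)
        ⟨by omega, by omega, m - 1 + q, by omega, by omega, h⟩
  simp only [sub_len] at hlen
  rw [show j = m by omega, show j' = m by omega] at hjj'
  exact hm hjj'

theorem len_eq_of_isPath (hT : IsTree T) {P Q : Walk T a b} (hP : IsPath P) (hQ : IsPath Q) :
    P.len = Q.len := by
  wlog h : P.len ≤ Q.len generalizing P Q
  · exact (this hQ hP (by omega)).symm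
  refine hQ _ _ h le_rfl ?_
  rw [← hT.toFun_eq_of_isPath hP hQ le_rfl h, P.end_eq, Q.end_eq]

theorem isGeodesic_of_isPath (hT : IsTree T) {P : Walk T a b} (hP : IsPath P) : P.IsGeodesic := by
  obtain ⟨Q, hQ⟩ := hT.connected.exists_isGeodesic a b
  exact (hT.len_eq_of_isPath hP (hQ.isPath hT.connected)).trans hQ

theorem toFun_dist_eq_of_between (hT : IsTree T) {P : Walk T a b} (hP : P.IsGeodesic) {u : T.V}
    (hu : T.dist a u + T.dist u b = T.dist a b) : P.toFun (T.dist a u) = u := by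
  obtain ⟨γ, hγ⟩ := hT.connected.exists_isGeodesic a u
  obtain ⟨δ, hδ⟩ := hT.connected.exists_isGeodesic u b
  have hW : (γ.concat δ).IsGeodesic := by
    unfold IsGeodesic at *
    rw [concat_len]
    omega
  have hγP : γ.len ≤ P.len := by unfold IsGeodesic at hP hγ; omega
  rw [← hγ, hT.toFun_eq_of_isPath (hP.isPath hT.connected) (hW.isPath hT.connected) hγP
    (by rw [concat_len]; omega), concat_toFun_of_le _ _ le_rfl, γ.end_eq]

theorem forall_isPath_onWalk_iff (hT : IsTree T) {y : T.V} :
    (∀ P : Walk T a b, IsPath P → OnWalk P y) ↔ T.dist a y + T.dist y b = T.dist a b := by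
  constructor
  · intro h
    obtain ⟨P, hP⟩ := hT.connected.exists_isGeodesic a b
    obtain ⟨i, hi, rfl⟩ := h P (hP.isPath hT.connected)
    obtain ⟨h₁, h₂⟩ := hP.dist_toFun hT.connected hi
    unfold IsGeodesic at hP
    omega
  · intro h P hP
    have hPg := hT.isGeodesic_of_isPath hP
    exact ⟨_, by unfold IsGeodesic at hPg; omega, hT.toFun_dist_eq_of_between hPg h⟩

theorem dist_add_dist_of_between (hT : IsTree T) {u v : T.V}
    (hu : T.dist a u + T.dist u b = T.dist a b) (hv : T.dist a v + T.dist v b = T.dist a b)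
    (huv : T.dist a u ≤ T.dist a v) : T.dist a u + T.dist u v = T.dist a v := by
  obtain ⟨P, hP⟩ := hT.connected.exists_isGeodesic a b
  have hsub := dist_le_len (P.sub _ _ huv (by unfold IsGeodesic at hP; omega)
    (hT.toFun_dist_eq_of_between hP hu) (hT.toFun_dist_eq_of_between hP hv))
  have := hT.connected.dist_triangle a u v
  simp only [sub_len] at hsub
  omega

theorem eq_of_adj_of_dist_add_one (hT : IsTree T) {w u u' : T.V} (hu : T.E u w) (hu' : T.E u' w)
    (h : T.dist a u + 1 = T.dist a w) (h' : T.dist a u' + 1 = T.dist a w) : u = u' := by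
  obtain ⟨P, hP⟩ := hT.connected.exists_isGeodesic a w
  rw [← hT.toFun_dist_eq_of_between hP (u := u) (by rwa [hT.dist_eq_one_of_adj hu]),
    ← hT.toFun_dist_eq_of_between hP (u := u') (by rwa [hT.dist_eq_one_of_adj hu'])]
  congr 1
  omega

theorem dist_ne_of_adj (hT : IsTree T) {u v : T.V} (h : T.E u v) : T.dist a u ≠ T.dist a v := by
  intro huv
  obtain ⟨P, hP⟩ := hT.connected.exists_isGeodesic a u
  have hW : IsPath (P.concat (ofAdj h)) := by
    intro i j hi hj hij
    wlog hle : i ≤ j generalizing i j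
    · exact (this j i hj hi hij.symm (by omega)).symm
    rcases (show j ≤ P.len ∨ j = P.len + 1 by
      rw [concat_len] at hj; change j ≤ P.len + 1 at hj; omega) with hjP | rfl
    · rw [concat_toFun_of_le _ _ (hle.trans hjP), concat_toFun_of_le _ _ hjP] at hij
      exact hP.isPath hT.connected i j (hle.trans hjP) hjP hij
    rcases hle.lt_or_eq with hi | rfl
    · rw [concat_toFun_of_le _ _ (by omega), concat_toFun_len_add] at hij
      have hdi := (hP.dist_toFun hT.connected (show i ≤ P.len by omega)).1
      rw [hij, show (ofAdj h).toFun 1 = v from (ofAdj h).end_eq, ← huv] at hdi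
      unfold IsGeodesic at hP
      obtain rfl : i = P.len := by omega
      rw [P.end_eq] at hij
      exact absurd h (hij ▸ hT.1 u)
    · rfl
  have := hT.isGeodesic_of_isPath hW
  unfold IsGeodesic at this hP
  rw [concat_len, ← huv, ← hP] at this
  exact Nat.succ_ne_self _ this

end IsTree

theorem statement_6_general (G T : Graph') (hT : IsTree T)
    (f : G.V → T.V) (hf : IsGraphHom G T f) (n : ℕ)
    (η : MultiHom G T)
    (hbound : ∀ z : G.V, ∀ y ∈ η.toFun z, T.dist (f z) y ≤ 2 * n)
    (x x' : G.V) (hxx' : G.E x x')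
    (hux : ∃ y ∈ η.toFun x, T.dist (f x) y = 2 * n)
    (hux' : ∃ y ∈ η.toFun x', T.dist (f x') y = 2 * n) :
    (∃ y : T.V, η.toFun x = {y} ∧
      ∀ y' ∈ η.toFun x', T.dist (f x') y' = 2 * n →
        ∀ P : Walk T (f x') y', IsPath P → OnWalk P y) ↔
    (∃ y ∈ η.toFun x, ∃ y' ∈ η.toFun x',
      T.dist (f x) y = 2 * n ∧ T.dist (f x') y' = 2 * n ∧
      ∀ P : Walk T (f x') y', IsPath P → OnWalk P y) := by
  constructor
  · rintro ⟨y, hηx, hpaths⟩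
    obtain ⟨y₀, hy₀, hd₀⟩ := hux
    obtain ⟨y', hy', hd'⟩ := hux'
    obtain rfl : y₀ = y := by rwa [hηx] at hy₀
    exact ⟨y₀, hy₀, y', hy', hd₀, hd', hpaths y' hy' hd'⟩
  · rintro ⟨y, hy, y', hy', hdy, hdy', hpaths⟩
    have hyy' := η.edge hxx' y hy y' hy'
    have hmid := hT.forall_isPath_onWalk_iff.1 hpaths
    rw [hT.dist_eq_one_of_adj hyy'] at hmid
    have hff' : T.dist (f x') (f x) = 1 := hT.dist_eq_one_of_adj (hf (G.symm hxx'))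
    have hfar : T.dist (f x) y' = 2 * n + 1 := by
      have h₁ := hT.connected.dist_triangle (f x) (f x') y'
      have h₂ := hT.connected.dist_triangle (f x') (f x) y'
      have h₃ := hT.dist_ne_of_adj (a := f x) hyy'
      rw [hT.dist_eq_one_of_adj (hf hxx')] at h₁
      rw [hff'] at h₂
      by_contra hne
      have hbetween : T.dist (f x') (f x) + T.dist (f x) y' = T.dist (f x') y' := by
        rw [hff']
        omega
      have := hT.dist_add_dist_of_between hbetween (hT.forall_isPath_onWalk_iff.1 hpaths)
        (by omega)
      omega
    refine ⟨y, Set.eq_singleton_iff_unique_mem.2 ⟨hy, fun z hz => ?_⟩, fun y'' hy'' hdy'' => ?_⟩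
    · have hzy' := η.edge hxx' z hz y' hy'
      have := hT.connected.dist_triangle (f x) z y'
      rw [hT.dist_eq_one_of_adj hzy'] at this
      have := hbound x z hz
      exact hT.eq_of_adj_of_dist_add_one (a := f x) hzy' hyy' (by omega) (by omega)
    · refine hT.forall_isPath_onWalk_iff.2 ?_
      rw [hT.dist_eq_one_of_adj (η.edge hxx' y hy y'' hy'')]
      omega

theorem statement_6 (G T : Graph') (hT : IsTree T)
    (f : G.V → T.V) (hf : IsGraphHom G T f) (n : ℕ) (hn : 1 ≤ n)
    (η : MultiHom G T)
    (hbound : ∀ z : G.V, ∀ y ∈ η.toFun z, T.dist (f z) y ≤ 2 * n)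
    (x x' : G.V) (hxx' : G.E x x')
    (hux : ∃ y ∈ η.toFun x, T.dist (f x) y = 2 * n)
    (hux' : ∃ y ∈ η.toFun x', T.dist (f x') y = 2 * n) :
    (∃ y : T.V, η.toFun x = {y} ∧
      ∀ y' ∈ η.toFun x', T.dist (f x') y' = 2 * n →
        ∀ P : Walk T (f x') y', IsPath P → OnWalk P y) ↔
    (∃ y ∈ η.toFun x, ∃ y' ∈ η.toFun x',
      T.dist (f x) y = 2 * n ∧ T.dist (f x') y' = 2 * n ∧
      ∀ P : Walk T (f x') y', IsPath P → OnWalk P y) :=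
  statement_6_general G T hT f hf n η hbound x x' hxx' hux hux'
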